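/- Let n ≥ 3 and s = (n-1)/2. For x, y ∈ S^{n-1} with x ≠ y, let K_{-s}(x·y) = (4/(n-2))^{s-1/2} (Γ(s+1/2)/Γ(2s)) ∫_0^∞ e^{-t(n-2)/2} (P_{e^{-t}}(x·y) − 1/ω_{n-1}) I_{s-1/2}((n-2)t/2) t^{s-1/2} dt. Then there exists a constant c depending only on n such that |K_{-s}(x·y)| ≤ c ln(1 + (1 − x·y)^{-n/2}) for all x, y ∈ S^{n-1} with x ≠ y. -/

import Mathlib

open MeasureTheory

/-- The surface area `ω_{n-1} = 2π^{n/2}/Γ(n/2)` of the unit sphere `S^{n-1} ⊂ ℝ^n`. -/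
noncomputable def omegaSphere (n : ℕ) : ℝ :=
  2 * Real.pi ^ ((n : ℝ) / 2) / Real.Gamma ((n : ℝ) / 2)

/-- The Poisson kernel for the unit ball in `ℝ^n`:
`P_r(τ) = (1 - r²)/(ω_{n-1}(1 - 2rτ + r²)^{n/2})`. -/
noncomputable def spherePoissonKernel (n : ℕ) (r τ : ℝ) : ℝ :=
  (1 - r ^ 2) / (omegaSphere n * (1 - 2 * r * τ + r ^ 2) ^ ((n : ℝ) / 2))

/-- The modified Bessel function of the first kind,
`I_ρ(z) = ∑_{m=0}^∞ (z/2)^(2m+ρ)/(Γ(m+1)Γ(m+ρ+1))`. -/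
noncomputable def besselI (ρ z : ℝ) : ℝ :=
  ∑' m : ℕ, (z / 2) ^ (2 * (m : ℝ) + ρ) /
    (Real.Gamma ((m : ℝ) + 1) * Real.Gamma ((m : ℝ) + ρ + 1))

/-!
Termwise comparison with the series of `cosh` gives `I_ρ(z) ≤ (z/2)^ρ cosh z / Γ(ρ+1)`, so the
weight `e^{-(n-2)t/2} I_{s-1/2}((n-2)t/2) t^{s-1/2}` is `O(t^{n-2})`. Put `r = e^{-t}` and
`u = 1 - x·y`. For `t ≤ 1` the Poisson denominator `1 - 2r(x·y) + r²` is at least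
`((t + √u)/3)²` and `1 - r² ≤ 2t`, hence `t^{n-2} |P_r - 1/ω| = O(1/(t + √u) + 1)`; for `t ≥ 1`
the kernel is Lipschitz in `r` near `0`, so `|P_r - 1/ω| = O(e^{-t})`. Integrating, the integral
is `O(log(1 + u^{-1/2}) + 1)`, and since `0 < u ≤ 2` both terms are `O(log(1 + u^{-n/2}))`.
-/

open Real Set
open scoped Nat

lemma Nat.factorial_two_mul_le_four_pow_mul (m : ℕ) : (2 * m)! ≤ 4 ^ m * m ! ^ 2 := by
  have h := Nat.choose_mul_factorial_mul_factorial (show m ≤ 2 * m by omega)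
  rw [show 2 * m - m = m by omega, ← Nat.centralBinom_eq_two_mul_choose] at h
  rw [← h, mul_assoc, sq]
  exact Nat.mul_le_mul_right _ (Nat.centralBinom_le_four_pow m)

lemma Real.factorial_mul_Gamma_le_Gamma_nat_add {ρ : ℝ} (hρ : 0 ≤ ρ) (m : ℕ) :
    m ! * Gamma (ρ + 1) ≤ Gamma (m + ρ + 1) := by
  induction m with
  | zero => simp
  | succ k ih =>
    rw [Nat.factorial_succ, Nat.cast_mul, Nat.cast_succ,
      show (k : ℝ) + 1 + ρ + 1 = (k + ρ + 1) + 1 by ring,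
      Gamma_add_one (s := k + ρ + 1) (by positivity), mul_assoc]
    exact mul_le_mul (by linarith) ih (by positivity) (by positivity)

lemma Real.exp_neg_mul_cosh_le_one {z : ℝ} (hz : 0 ≤ z) : exp (-z) * cosh z ≤ 1 := by
  have : exp (-z) * exp (-z) ≤ 1 := by rw [← exp_add, exp_le_one_iff]; linarith
  rw [cosh_eq, mul_div_assoc', mul_add, ← exp_add, neg_add_cancel, exp_zero]
  linarith

lemma besselI_term_le {ρ z : ℝ} (hρ : 0 ≤ ρ) (hz : 0 ≤ z) (m : ℕ) :
    (z / 2) ^ (2 * (m : ℝ) + ρ) / (Gamma ((m : ℝ) + 1) * Gamma ((m : ℝ) + ρ + 1)) ≤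
      (z / 2) ^ ρ / Gamma (ρ + 1) * (z ^ (2 * m) / (2 * m)!) := by
  have hz2 : 0 ≤ z / 2 := by positivity
  have hΓ : 0 < Gamma (ρ + 1) := Gamma_pos_of_pos (by positivity)
  have hpow : (z / 2) ^ (2 * (m : ℝ) + ρ) = (z / 2) ^ ρ * (z ^ (2 * m) / 4 ^ m) := by
    rw [rpow_add_of_nonneg hz2 (by positivity) hρ,
      show 2 * (m : ℝ) = (2 * m : ℕ) by push_cast; ring, rpow_natCast, div_pow, pow_mul, pow_mul]
    norm_num
    ring
  have hfac : ((2 * m)! : ℝ) ≤ 4 ^ m * (m ! * m !) := by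
    exact_mod_cast (sq (m !)) ▸ Nat.factorial_two_mul_le_four_pow_mul m
  rw [hpow, Gamma_nat_eq_factorial]
  calc (z / 2) ^ ρ * (z ^ (2 * m) / 4 ^ m) / (m ! * Gamma (m + ρ + 1))
      ≤ (z / 2) ^ ρ * (z ^ (2 * m) / 4 ^ m) / (m ! * (m ! * Gamma (ρ + 1))) := by
        gcongr
        exact factorial_mul_Gamma_le_Gamma_nat_add hρ m
    _ = (z / 2) ^ ρ / Gamma (ρ + 1) * (z ^ (2 * m) / (4 ^ m * (m ! * m !))) := by
        field_simp
    _ ≤ (z / 2) ^ ρ / Gamma (ρ + 1) * (z ^ (2 * m) / (2 * m)!) := by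
        gcongr

lemma besselI_term_nonneg {ρ z : ℝ} (hρ : 0 ≤ ρ) (hz : 0 ≤ z) (m : ℕ) :
    0 ≤ (z / 2) ^ (2 * (m : ℝ) + ρ) / (Gamma ((m : ℝ) + 1) * Gamma ((m : ℝ) + ρ + 1)) := by
  have := Gamma_pos_of_pos (show 0 < (m : ℝ) + 1 by positivity)
  have := Gamma_pos_of_pos (show 0 < (m : ℝ) + ρ + 1 by positivity)
  positivity

lemma besselI_nonneg {ρ z : ℝ} (hρ : 0 ≤ ρ) (hz : 0 ≤ z) : 0 ≤ besselI ρ z :=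
  tsum_nonneg (besselI_term_nonneg hρ hz)

lemma besselI_le_rpow_mul_cosh {ρ z : ℝ} (hρ : 0 ≤ ρ) (hz : 0 ≤ z) :
    besselI ρ z ≤ (z / 2) ^ ρ / Gamma (ρ + 1) * cosh z := by
  have hcosh := (Real.hasSum_cosh z).mul_left ((z / 2) ^ ρ / Gamma (ρ + 1))
  have hterm := besselI_term_le hρ hz
  exact hasSum_le hterm (hcosh.summable.of_nonneg_of_le (besselI_term_nonneg hρ hz) hterm).hasSum
    hcosh

lemma exp_neg_mul_besselI_mul_rpow_le {a t : ℝ} (ha : 0 ≤ a) (ht : 0 ≤ t) :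
    exp (-(a * t)) * besselI a (a * t) * t ^ a ≤ (a / 2) ^ a / Gamma (a + 1) * t ^ (2 * a) := by
  have hat : 0 ≤ a * t := mul_nonneg ha ht
  calc exp (-(a * t)) * besselI a (a * t) * t ^ a
      ≤ exp (-(a * t)) * ((a * t / 2) ^ a / Gamma (a + 1) * cosh (a * t)) * t ^ a := by
        gcongr
        exact besselI_le_rpow_mul_cosh ha hat
    _ = (exp (-(a * t)) * cosh (a * t)) * ((a / 2) ^ a / Gamma (a + 1) * t ^ (2 * a)) := by
        rw [mul_div_right_comm, mul_rpow (by positivity) ht, two_mul, rpow_add_of_nonneg ht ha ha]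
        ring
    _ ≤ (a / 2) ^ a / Gamma (a + 1) * t ^ (2 * a) := by
        have := Gamma_pos_of_pos (show 0 < a + 1 by positivity)
        exact mul_le_of_le_one_left (by positivity) (exp_neg_mul_cosh_le_one hat)

lemma omegaSphere_pos {n : ℕ} (hn : 0 < n) : 0 < omegaSphere n := by
  have := Gamma_pos_of_pos (show 0 < (n : ℝ) / 2 by positivity)
  unfold omegaSphere
  positivity

lemma omegaSphere_nonneg (n : ℕ) : 0 ≤ omegaSphere n := by
  have := Gamma_nonneg_of_nonneg (show 0 ≤ (n : ℝ) / 2 by positivity)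
  unfold omegaSphere
  positivity

lemma spherePoissonKernel_eq_div_sqrt_pow {n : ℕ} {r τ : ℝ} (hd : 0 ≤ 1 - 2 * r * τ + r ^ 2) :
    spherePoissonKernel n r τ = (1 - r ^ 2) / (omegaSphere n * √(1 - 2 * r * τ + r ^ 2) ^ n) := by
  rw [spherePoissonKernel, sqrt_eq_rpow, ← rpow_mul_natCast hd]
  ring_nf

lemma spherePoissonKernel_nonneg {n : ℕ} {r τ : ℝ} (hr0 : 0 ≤ r) (hr1 : r ≤ 1) (hτ : τ ≤ 1) :
    0 ≤ spherePoissonKernel n r τ := by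
  have hd : 0 ≤ 1 - 2 * r * τ + r ^ 2 := by nlinarith
  have := omegaSphere_nonneg n
  have : 0 ≤ 1 - r ^ 2 := by nlinarith
  rw [spherePoissonKernel_eq_div_sqrt_pow hd]
  positivity

lemma Real.abs_sqrt_sub_one_le {d : ℝ} (hd : 0 ≤ d) : |√d - 1| ≤ |d - 1| := by
  calc |√d - 1| ≤ |√d - 1| * (√d + 1) :=
        le_mul_of_one_le_right (abs_nonneg _) (le_add_of_nonneg_left (sqrt_nonneg d))
    _ = |d - 1| := by
      rw [← abs_of_nonneg (show 0 ≤ √d + 1 by positivity), ← abs_mul,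
        show (√d - 1) * (√d + 1) = √d ^ 2 - 1 by ring, sq_sqrt hd]

lemma abs_spherePoissonKernel_sub_le {n : ℕ} (hn : 0 < n) {r τ : ℝ} (hr0 : 0 ≤ r)
    (hr : r ≤ 1 / 2) (hτ : |τ| ≤ 1) :
    |spherePoissonKernel n r τ - 1 / omegaSphere n| ≤
      2 ^ n * (1 + 3 * n * 2 ^ n) / omegaSphere n * r := by
  obtain ⟨hτ₁, hτ₂⟩ := abs_le.mp hτ
  have hω := omegaSphere_pos hn
  set d := 1 - 2 * r * τ + r ^ 2 with hd_def
  have hd : 1 / 4 ≤ d := by nlinarith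
  have hq₁ : 1 / 2 ≤ √d := le_sqrt_of_sq_le (by linarith)
  have hq₂ : √d ≤ 2 := sqrt_le_iff.mpr ⟨by norm_num, by nlinarith⟩
  have hqn : (1 / 2) ^ n ≤ √d ^ n := by gcongr
  have hqn₀ : 0 < √d ^ n := lt_of_lt_of_le (by positivity) hqn
  have hdist : |d - 1| ≤ 3 * r := abs_le.mpr ⟨by nlinarith, by nlinarith⟩
  have hpow : |√d ^ n - 1| ≤ 3 * n * 2 ^ n * r := by
    calc |√d ^ n - 1| = |√d ^ n - 1 ^ n| := by rw [one_pow]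
      _ ≤ |√d - 1| * n * max |√d| |1| ^ (n - 1) := abs_pow_sub_pow_le ..
      _ ≤ (3 * r) * n * 2 ^ n := by
        gcongr
        · exact (abs_sqrt_sub_one_le (by linarith)).trans hdist
        · rw [abs_of_nonneg (by positivity), abs_one]
          calc max √d 1 ^ (n - 1) ≤ 2 ^ (n - 1) := by gcongr; exact max_le hq₂ one_le_two
            _ ≤ 2 ^ n := pow_le_pow_right₀ one_le_two (by omega)
      _ = 3 * n * 2 ^ n * r := by ring
  have hnum : |1 - r ^ 2 - √d ^ n| ≤ (1 + 3 * n * 2 ^ n) * r := by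
    calc |1 - r ^ 2 - √d ^ n| ≤ r ^ 2 + |√d ^ n - 1| := by
          rw [show 1 - r ^ 2 - √d ^ n = -(r ^ 2) - (√d ^ n - 1) by ring]
          exact (abs_sub _ _).trans (by rw [abs_neg, abs_of_nonneg (sq_nonneg r)])
      _ ≤ r + 3 * n * 2 ^ n * r := by nlinarith
      _ = (1 + 3 * n * 2 ^ n) * r := by ring
  have hP : spherePoissonKernel n r τ - 1 / omegaSphere n =
      (1 - r ^ 2 - √d ^ n) / (omegaSphere n * √d ^ n) := by
    rw [spherePoissonKernel_eq_div_sqrt_pow (by linarith), ← hd_def]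
    field_simp
  rw [hP, abs_div, abs_of_pos (mul_pos hω hqn₀)]
  calc |1 - r ^ 2 - √d ^ n| / (omegaSphere n * √d ^ n)
      ≤ (1 + 3 * n * 2 ^ n) * r / (omegaSphere n * (1 / 2) ^ n) := by gcongr
    _ = 2 ^ n * (1 + 3 * n * 2 ^ n) / omegaSphere n * r := by
      rw [one_div_pow]
      field_simp

lemma Real.half_le_one_sub_exp_neg {t : ℝ} (ht0 : 0 ≤ t) (ht1 : t ≤ 1) :
    t / 2 ≤ 1 - exp (-t) := by
  have h : exp (-t) * (t + 1) ≤ 1 := by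
    calc exp (-t) * (t + 1) ≤ exp (-t) * exp t := by gcongr; exact add_one_le_exp t
      _ = 1 := by rw [← exp_add, neg_add_cancel, exp_zero]
  nlinarith [mul_nonneg ht0 (sub_nonneg.mpr ht1), exp_pos (-t)]

lemma sq_add_sqrt_div_three_le {t τ : ℝ} (ht0 : 0 ≤ t) (ht1 : t ≤ 1) (hτ : τ ≤ 1) :
    ((t + √(1 - τ)) / 3) ^ 2 ≤ 1 - 2 * exp (-t) * τ + exp (-t) ^ 2 := by
  have hr : exp (-1) ≤ exp (-t) := exp_le_exp.mpr (by linarith)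
  have hr₀ : 1 / 3 ≤ exp (-t) := by linarith [exp_neg_one_gt_d9]
  have hu : √(1 - τ) ^ 2 = 1 - τ := sq_sqrt (by linarith)
  have h₁ := half_le_one_sub_exp_neg ht0 ht1
  have h₂ : 1 - 2 * exp (-t) * τ + exp (-t) ^ 2 = (1 - exp (-t)) ^ 2 + 2 * exp (-t) * (1 - τ) := by
    ring
  rw [h₂]
  nlinarith [sq_nonneg (t - √(1 - τ)), sq_nonneg (1 - exp (-t) - t / 2), sqrt_nonneg (1 - τ)]

lemma pow_mul_spherePoissonKernel_exp_neg_le {n : ℕ} (hn : 2 ≤ n) {t τ : ℝ} (ht0 : 0 < t)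
    (ht1 : t ≤ 1) (hτ : τ ≤ 1) :
    t ^ (n - 2) * spherePoissonKernel n (exp (-t)) τ ≤
      2 * 3 ^ n / (omegaSphere n * (t + √(1 - τ))) := by
  obtain ⟨k, rfl⟩ : ∃ k, n = k + 2 := ⟨n - 2, by omega⟩
  have hω := omegaSphere_pos (show 0 < k + 2 by omega)
  set w := t + √(1 - τ)
  have hw : 0 < w := by positivity
  have htw : t ≤ w := le_add_of_nonneg_right (sqrt_nonneg _)
  have hd := sq_add_sqrt_div_three_le ht0.le ht1 hτ
  have hsqrt : w / 3 ≤ √(1 - 2 * exp (-t) * τ + exp (-t) ^ 2) := le_sqrt_of_sq_le hd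
  have hnum : 1 - exp (-t) ^ 2 ≤ 2 * t := by
    nlinarith [one_sub_le_exp_neg t, exp_pos (-t), exp_lt_one_iff.mpr (neg_lt_zero.mpr ht0)]
  rw [spherePoissonKernel_eq_div_sqrt_pow ((sq_nonneg _).trans hd), Nat.add_sub_cancel]
  calc t ^ k * ((1 - exp (-t) ^ 2) /
        (omegaSphere (k + 2) * √(1 - 2 * exp (-t) * τ + exp (-t) ^ 2) ^ (k + 2)))
      ≤ t ^ k * (2 * t / (omegaSphere (k + 2) * (w / 3) ^ (k + 2))) := by gcongr
    _ = 2 * 3 ^ (k + 2) * t ^ (k + 1) / (omegaSphere (k + 2) * w ^ (k + 2)) := by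
      rw [div_pow]
      field_simp
      ring
    _ ≤ 2 * 3 ^ (k + 2) * w ^ (k + 1) / (omegaSphere (k + 2) * w ^ (k + 2)) := by gcongr
    _ = 2 * 3 ^ (k + 2) / (omegaSphere (k + 2) * w) := by
      field_simp
      ring

lemma pow_mul_abs_spherePoissonKernel_exp_neg_sub_le {n : ℕ} (hn : 2 ≤ n) {t τ : ℝ}
    (ht0 : 0 < t) (ht1 : t ≤ 1) (hτ : τ ≤ 1) :
    t ^ (n - 2) * |spherePoissonKernel n (exp (-t)) τ - 1 / omegaSphere n| ≤
      2 * 3 ^ n / omegaSphere n * (t + √(1 - τ))⁻¹ + 1 / omegaSphere n := by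
  have hω := omegaSphere_pos (show 0 < n by omega)
  have hP := spherePoissonKernel_nonneg (n := n) (exp_pos (-t)).le
    (exp_le_one_iff.mpr (by linarith)) hτ
  have htk : t ^ (n - 2) ≤ 1 := pow_le_one₀ ht0.le ht1
  have habs : |spherePoissonKernel n (exp (-t)) τ - 1 / omegaSphere n| ≤
      spherePoissonKernel n (exp (-t)) τ + 1 / omegaSphere n :=
    (abs_sub _ _).trans_eq (by rw [abs_of_nonneg hP, abs_of_pos (by positivity)])
  calc t ^ (n - 2) * |spherePoissonKernel n (exp (-t)) τ - 1 / omegaSphere n|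
      ≤ t ^ (n - 2) * spherePoissonKernel n (exp (-t)) τ + t ^ (n - 2) * (1 / omegaSphere n) := by
        rw [← mul_add]; gcongr
    _ ≤ 2 * 3 ^ n / (omegaSphere n * (t + √(1 - τ))) + 1 / omegaSphere n := by
        gcongr
        · exact pow_mul_spherePoissonKernel_exp_neg_le hn ht0 ht1 hτ
        · exact mul_le_of_le_one_left (by positivity) htk
    _ = 2 * 3 ^ n / omegaSphere n * (t + √(1 - τ))⁻¹ + 1 / omegaSphere n := by
        rw [div_mul_eq_div_div, div_eq_mul_inv _ (t + _)]

lemma abs_spherePoissonKernel_exp_neg_sub_le {n : ℕ} (hn : 0 < n) {t τ : ℝ} (ht : 1 ≤ t)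
    (hτ : |τ| ≤ 1) :
    |spherePoissonKernel n (exp (-t)) τ - 1 / omegaSphere n| ≤
      2 ^ n * (1 + 3 * n * 2 ^ n) / omegaSphere n * exp (-t) := by
  refine abs_spherePoissonKernel_sub_le hn (exp_pos _).le ?_ hτ
  calc exp (-t) ≤ exp (-1) := exp_le_exp.mpr (by linarith)
    _ ≤ 1 / 2 := exp_neg_one_lt_half.le

lemma integrableOn_inv_add_Ioc {c : ℝ} (hc : 0 < c) :
    IntegrableOn (fun t : ℝ => (t + c)⁻¹) (Ioc 0 1) :=
  (ContinuousOn.integrableOn_Icc (ContinuousOn.inv₀ (by fun_prop)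
    (fun t ht => by have := ht.1; positivity))).mono_set Ioc_subset_Icc_self

lemma integral_inv_add_Ioc {c : ℝ} (hc : 0 < c) :
    ∫ t in Ioc (0 : ℝ) 1, (t + c)⁻¹ = log (1 + c⁻¹) := by
  rw [← intervalIntegral.integral_of_le zero_le_one,
    intervalIntegral.integral_comp_add_right (fun x : ℝ => x⁻¹), integral_inv_of_pos (by linarith)
    (by linarith), zero_add, add_div, div_self hc.ne', one_div, add_comm]

lemma integrableOn_mul_inv_add_add_Ioc {c : ℝ} (hc : 0 < c) (A B : ℝ) :
    IntegrableOn (fun t : ℝ => A * (t + c)⁻¹ + B) (Ioc 0 1) :=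
  ((integrableOn_inv_add_Ioc hc).const_mul A).add (integrableOn_const measure_Ioc_lt_top.ne)

lemma integrableOn_pow_mul_exp_neg_Ioi (k : ℕ) :
    IntegrableOn (fun t : ℝ => t ^ k * exp (-t)) (Ioi 0) := by
  have := GammaIntegral_convergent (show (0 : ℝ) < k + 1 by positivity)
  simp only [add_sub_cancel_right, rpow_natCast] at this
  simpa only [mul_comm] using this

lemma integral_pow_mul_exp_neg_Ioi (k : ℕ) : ∫ t in Ioi (0 : ℝ), t ^ k * exp (-t) = k ! := by
  rw [← Gamma_nat_eq_factorial, Gamma_eq_integral (by positivity)]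
  simp only [add_sub_cancel_right, rpow_natCast, mul_comm]

lemma integrable_indicator_add_pow_mul_exp_neg {c : ℝ} (hc : 0 < c) (A B D : ℝ) (k : ℕ) :
    Integrable (fun t => (Ioc 0 1).indicator (fun t => A * (t + c)⁻¹ + B) t +
      D * (t ^ k * exp (-t))) (volume.restrict (Ioi 0)) := by
  refine Integrable.add ?_ ((integrableOn_pow_mul_exp_neg_Ioi k).const_mul D)
  exact ((integrableOn_mul_inv_add_add_Ioc hc A B).integrable_indicator measurableSet_Ioc).restrict

lemma integral_indicator_add_pow_mul_exp_neg {c : ℝ} (hc : 0 < c) (A B D : ℝ) (k : ℕ) :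
    ∫ t in Ioi 0, ((Ioc 0 1).indicator (fun t => A * (t + c)⁻¹ + B) t + D * (t ^ k * exp (-t))) =
      A * log (1 + c⁻¹) + B + D * k ! := by
  rw [integral_add
      ((integrableOn_mul_inv_add_add_Ioc hc A B).integrable_indicator measurableSet_Ioc).restrict
      ((integrableOn_pow_mul_exp_neg_Ioi k).const_mul D),
    integral_indicator measurableSet_Ioc, Measure.restrict_restrict measurableSet_Ioc,
    inter_eq_self_of_subset_left Ioc_subset_Ioi_self,
    integral_add ((integrableOn_inv_add_Ioc hc).const_mul A)
      (integrableOn_const measure_Ioc_lt_top.ne), integral_const_mul, integral_inv_add_Ioc hc,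
    setIntegral_const, Real.volume_real_Ioc, integral_const_mul, integral_pow_mul_exp_neg_Ioi]
  norm_num

lemma log_one_add_inv_sqrt_le {n : ℕ} (hn : 1 ≤ n) {u : ℝ} (hu : 0 < u) :
    log (1 + (√u)⁻¹) ≤ log 2 + log (1 + u ^ (-(n : ℝ) / 2)) := by
  have hpow : 0 < u ^ (-(n : ℝ) / 2) := rpow_pos_of_pos hu _
  rw [← log_mul two_ne_zero (by positivity)]
  refine log_le_log (by positivity) ?_
  rcases le_total u 1 with hu1 | hu1
  · have : (√u)⁻¹ ≤ u ^ (-(n : ℝ) / 2) := by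
      rw [sqrt_eq_rpow, ← rpow_neg hu.le]
      exact rpow_le_rpow_of_exponent_ge hu hu1 (by
        have : (1 : ℝ) ≤ n := by exact_mod_cast hn
        linarith)
    linarith
  · have : (√u)⁻¹ ≤ 1 := inv_le_one_of_one_le₀ (one_le_sqrt.mpr hu1)
    linarith

lemma log_one_add_two_rpow_le (n : ℕ) {u : ℝ} (hu : 0 < u) (hu2 : u ≤ 2) :
    log (1 + 2 ^ (-(n : ℝ) / 2)) ≤ log (1 + u ^ (-(n : ℝ) / 2)) := by
  have := rpow_pos_of_pos two_pos (-(n : ℝ) / 2)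
  have hn : -(n : ℝ) / 2 ≤ 0 := by have := n.cast_nonneg (α := ℝ); linarith
  exact log_le_log (by positivity) (by linarith [rpow_le_rpow_of_nonpos hu hu2 hn])

noncomputable def sphereKernelIntegrand (n : ℕ) (τ t : ℝ) : ℝ :=
  exp (-(t * ((n : ℝ) - 2) / 2)) * (spherePoissonKernel n (exp (-t)) τ - 1 / omegaSphere n) *
    besselI (((n : ℝ) - 2) / 2) (((n : ℝ) - 2) * t / 2) * t ^ (((n : ℝ) - 2) / 2)

lemma abs_sphereKernelIntegrand_le {n : ℕ} (hn : 2 ≤ n) {τ t : ℝ} (ht : 0 < t) :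
    |sphereKernelIntegrand n τ t| ≤
      |spherePoissonKernel n (exp (-t)) τ - 1 / omegaSphere n| *
        ((((n : ℝ) - 2) / 4) ^ (((n : ℝ) - 2) / 2) / Gamma (((n : ℝ) - 2) / 2 + 1) *
          t ^ (n - 2)) := by
  set a : ℝ := ((n : ℝ) - 2) / 2 with ha_def
  have ha : 0 ≤ a := by
    have : (2 : ℝ) ≤ n := by exact_mod_cast hn
    linarith
  have hBessel := exp_neg_mul_besselI_mul_rpow_le ha ht.le
  rw [show 2 * a = ((n - 2 : ℕ) : ℝ) by rw [Nat.cast_sub hn]; push_cast; ring, rpow_natCast,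
    show a / 2 = ((n : ℝ) - 2) / 4 by ring] at hBessel
  have heq : sphereKernelIntegrand n τ t =
      (spherePoissonKernel n (exp (-t)) τ - 1 / omegaSphere n) *
        (exp (-(a * t)) * besselI a (a * t) * t ^ a) := by
    rw [sphereKernelIntegrand, ← ha_def, show t * ((n : ℝ) - 2) / 2 = a * t by ring,
      show ((n : ℝ) - 2) * t / 2 = a * t by ring]
    ring
  have hnonneg : 0 ≤ exp (-(a * t)) * besselI a (a * t) * t ^ a := by
    have := besselI_nonneg ha (mul_nonneg ha ht.le)
    positivity
  rw [heq, abs_mul, abs_of_nonneg hnonneg]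
  gcongr

lemma exists_abs_sphereKernelIntegrand_le {n : ℕ} (hn : 2 ≤ n) :
    ∃ A B D : ℝ, 0 ≤ A ∧ ∀ τ t : ℝ, |τ| ≤ 1 → 0 < t →
      |sphereKernelIntegrand n τ t| ≤
        (Ioc 0 1).indicator (fun t => A * (t + √(1 - τ))⁻¹ + B) t +
          D * (t ^ (n - 2) * exp (-t)) := by
  set C := (((n : ℝ) - 2) / 4) ^ (((n : ℝ) - 2) / 2) / Gamma (((n : ℝ) - 2) / 2 + 1)
  have hn' : (2 : ℝ) ≤ n := by exact_mod_cast hn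
  have hC : 0 ≤ C := by
    have := Gamma_pos_of_pos (show 0 < ((n : ℝ) - 2) / 2 + 1 by linarith)
    have : 0 ≤ (((n : ℝ) - 2) / 4) ^ (((n : ℝ) - 2) / 2) := rpow_nonneg (by linarith) _
    positivity
  have hω := omegaSphere_pos (show 0 < n by omega)
  refine ⟨C * (2 * 3 ^ n / omegaSphere n), C * (1 / omegaSphere n),
    C * (2 ^ n * (1 + 3 * n * 2 ^ n) / omegaSphere n), by positivity, fun τ t hτ ht => ?_⟩
  refine (abs_sphereKernelIntegrand_le hn ht).trans ?_
  rcases le_or_gt t 1 with ht1 | ht1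
  · have hnear := pow_mul_abs_spherePoissonKernel_exp_neg_sub_le hn ht ht1 (abs_le.mp hτ).2
    rw [indicator_of_mem (show t ∈ Ioc 0 1 from ⟨ht, ht1⟩)]
    calc |spherePoissonKernel n (exp (-t)) τ - 1 / omegaSphere n| * (C * t ^ (n - 2))
        = C * (t ^ (n - 2) * |spherePoissonKernel n (exp (-t)) τ - 1 / omegaSphere n|) := by ring
      _ ≤ C * (2 * 3 ^ n / omegaSphere n * (t + √(1 - τ))⁻¹ + 1 / omegaSphere n) := by gcongr
      _ ≤ _ := le_add_of_le_of_nonneg (le_of_eq (by ring)) (by positivity)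
  · have hfar := abs_spherePoissonKernel_exp_neg_sub_le (show 0 < n by omega) ht1.le hτ
    rw [indicator_of_notMem (fun h => ht1.not_ge h.2), zero_add]
    calc |spherePoissonKernel n (exp (-t)) τ - 1 / omegaSphere n| * (C * t ^ (n - 2))
        ≤ 2 ^ n * (1 + 3 * n * 2 ^ n) / omegaSphere n * exp (-t) * (C * t ^ (n - 2)) := by gcongr
      _ = _ := by ring

lemma exists_abs_integral_sphereKernelIntegrand_le {n : ℕ} (hn : 2 ≤ n) :
    ∃ c : ℝ, ∀ τ : ℝ, |τ| ≤ 1 → τ < 1 →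
      |∫ t in Ioi 0, sphereKernelIntegrand n τ t| ≤ c * log (1 + (1 - τ) ^ (-(n : ℝ) / 2)) := by
  obtain ⟨A, B, D, hA, hbound⟩ := exists_abs_sphereKernelIntegrand_le hn
  set L₀ := log (1 + 2 ^ (-(n : ℝ) / 2))
  have hL₀ : 0 < L₀ := log_pos (by linarith [rpow_pos_of_pos two_pos (-(n : ℝ) / 2)])
  set E := A * log 2 + B + D * (n - 2)!
  refine ⟨A + |E| / L₀, fun τ hτ hτ1 => ?_⟩
  have hu : 0 < 1 - τ := by linarith
  have hsqrt : 0 < √(1 - τ) := sqrt_pos.mpr hu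
  set L := log (1 + (1 - τ) ^ (-(n : ℝ) / 2))
  have hL : L₀ ≤ L := log_one_add_two_rpow_le n hu (by linarith [(abs_le.mp hτ).1])
  have hE : E ≤ |E| / L₀ * L :=
    calc E ≤ |E| / L₀ * L₀ := by rw [div_mul_cancel₀ _ hL₀.ne']; exact le_abs_self E
      _ ≤ |E| / L₀ * L := by gcongr
  calc |∫ t in Ioi 0, sphereKernelIntegrand n τ t|
      ≤ ∫ t in Ioi 0, ((Ioc 0 1).indicator (fun t => A * (t + √(1 - τ))⁻¹ + B) t +
          D * (t ^ (n - 2) * exp (-t))) := by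
        rw [← Real.norm_eq_abs]
        refine norm_integral_le_of_norm_le
          (integrable_indicator_add_pow_mul_exp_neg hsqrt A B D _) ?_
        filter_upwards [ae_restrict_mem measurableSet_Ioi] with t ht
        exact hbound τ t hτ ht
    _ = A * log (1 + (√(1 - τ))⁻¹) + B + D * (n - 2)! :=
        integral_indicator_add_pow_mul_exp_neg hsqrt A B D _
    _ ≤ A * (log 2 + L) + B + D * (n - 2)! := by
        gcongr
        exact log_one_add_inv_sqrt_le (by omega) hu
    _ = A * L + E := by ring
    _ ≤ (A + |E| / L₀) * L := by linarith

theorem stmt11 (n : ℕ) (hn : 3 ≤ n) (s : ℝ) (hs : s = ((n : ℝ) - 1) / 2) :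
    ∃ c : ℝ, ∀ x y : EuclideanSpace ℝ (Fin n),
      x ∈ Metric.sphere (0 : EuclideanSpace ℝ (Fin n)) 1 →
      y ∈ Metric.sphere (0 : EuclideanSpace ℝ (Fin n)) 1 → x ≠ y →
      |(4 / ((n : ℝ) - 2)) ^ (s - 1/2) * (Real.Gamma (s + 1/2) / Real.Gamma (2 * s)) *
          ∫ t in Set.Ioi (0 : ℝ),
            Real.exp (-(t * ((n : ℝ) - 2) / 2)) *
              (spherePoissonKernel n (Real.exp (-t)) (inner ℝ x y : ℝ) - 1 / omegaSphere n) *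
              besselI (s - 1/2) (((n : ℝ) - 2) * t / 2) * t ^ (s - 1/2)| ≤
        c * Real.log (1 + (1 - (inner ℝ x y : ℝ)) ^ (-(n : ℝ) / 2)) := by
  obtain ⟨c, hc⟩ := exists_abs_integral_sphereKernelIntegrand_le (show 2 ≤ n by omega)
  rw [show s - 1 / 2 = ((n : ℝ) - 2) / 2 by rw [hs]; ring]
  refine ⟨|(4 / ((n : ℝ) - 2)) ^ (((n : ℝ) - 2) / 2) * (Gamma (s + 1 / 2) / Gamma (2 * s))| * c,
    fun x y hx hy hxy => ?_⟩
  rw [mem_sphere_zero_iff_norm] at hx hy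
  have hτ : |inner ℝ x y| ≤ 1 := by simpa [hx, hy] using abs_real_inner_le_norm x y
  have hτ1 : inner ℝ x y < 1 := (inner_lt_one_iff_real_of_norm_eq_one hx hy).mpr hxy
  rw [abs_mul, mul_assoc]
  exact mul_le_mul_of_nonneg_left (hc _ hτ hτ1) (abs_nonneg _)
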